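/- arXiv:2507.19080 — 5 statements merged into one kernel-verified Lean document; each statement's English description precedes it below -/
import Mathlib

section
/- If (a,b,c) is a q-Markov triple, then so is (a,b,c′), where c′ = q^{-1}(q² + q + 1)·a·b − c; in particular (a,b,c′) again satisfies the q-Markov equation and the evaluation c′(1) is a positive integer. -/
open LaurentPolynomial

namespace QMarkovPaper

/-- Evaluation at `q = 1`: the ring homomorphism `ℤ[q^{±1}] → ℤ` sending `q = T 1` to `1`. -/
noncomputable def ev1 : LaurentPolynomial ℤ →+* ℤ :=
  AddMonoidAlgebra.liftNCRingHom (RingHom.id ℤ) 1 (fun _ _ => Commute.all _ _)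

/-- The `q`-Markov equation
`a² + b² + c² = q⁻¹(q² + q + 1)·a·b·c + (q − 1)(q⁻¹ − 1)` in `ℤ[q^{±1}]`. -/
def qMarkovEq (a b c : LaurentPolynomial ℤ) : Prop :=
  a ^ 2 + b ^ 2 + c ^ 2 =
    T (-1) * (T 2 + T 1 + 1) * (a * b * c) + (T 1 - 1) * (T (-1) - 1)

/-- A `q`-Markov triple: a solution of the `q`-Markov equation whose evaluations
at `q = 1` are positive integers. -/
def qMarkovTriple (a b c : LaurentPolynomial ℤ) : Prop :=
  qMarkovEq a b c ∧ 0 < ev1 a ∧ 0 < ev1 b ∧ 0 < ev1 c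

/-- The `q`-integer `[n]_q = (qⁿ − 1)/(q − 1) ∈ ℤ[q^{±1}]`, for `n : ℤ`. -/
noncomputable def qint : ℤ → LaurentPolynomial ℤ
  | Int.ofNat n => ∑ i ∈ Finset.range n, T (i : ℤ)
  | Int.negSucc n => -∑ i ∈ Finset.range (n + 1), T (-(i + 1) : ℤ)

/-- The `q`-deformed Cohn matrix `A(n)_q`. -/
noncomputable def Aq (n : ℤ) : Matrix (Fin 2) (Fin 2) (LaurentPolynomial ℤ) :=
  !![T (2 - n) * qint n, T (1 - n);
     qint n * qint (3 - n) - T (n - 1), T (-1) * qint (3 - n)]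

/-- The `q`-deformed Cohn matrix `B(n)_q = A(n)_q · A(n+1)_q`. -/
noncomputable def Bq (n : ℤ) : Matrix (Fin 2) (Fin 2) (LaurentPolynomial ℤ) :=
  Aq n * Aq (n + 1)

/-- The pair of `q`-deformed Cohn matrices attached to a vertex of the binary tree,
encoded as a word over `{0,1}` (here `false = 0`, `true = 1`):
`P n [] = (A(n)_q, B(n)_q)`; if `P n u = (M, N)` then `P n (u·0) = (M, M·N)` and
`P n (u·1) = (M·N, N)`. -/
noncomputable def P (n : ℤ) (u : List Bool) :
    Matrix (Fin 2) (Fin 2) (LaurentPolynomial ℤ) ×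
      Matrix (Fin 2) (Fin 2) (LaurentPolynomial ℤ) :=
  u.foldl (fun p b => if b then (p.1 * p.2, p.2) else (p.1, p.1 * p.2)) (Aq n, Bq n)

/-!
The mutation `c ↦ c' = q⁻¹(q² + q + 1)ab − c` exchanges the two roots of the monic quadratic
`X² − q⁻¹(q² + q + 1)ab·X + (a² + b² − (q − 1)(q⁻¹ − 1))`, so it preserves the `q`-Markov
equation. By Vieta, `c·c' = a² + b² − (q − 1)(q⁻¹ − 1)`, whose value at `q = 1` is
`a(1)² + b(1)² > 0`; as `c(1) > 0`, also `c'(1) > 0`.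
-/

lemma ev1_T (n : ℤ) : ev1 (T n) = 1 := by
  show AddMonoidAlgebra.liftNC _ _ (AddMonoidAlgebra.single n 1) = 1
  rw [AddMonoidAlgebra.liftNC_single]
  simp

namespace qMarkovEq

variable {a b c : LaurentPolynomial ℤ}

theorem mutate (h : qMarkovEq a b c) :
    qMarkovEq a b (T (-1) * (T 2 + T 1 + 1) * (a * b) - c) := by
  unfold qMarkovEq at h ⊢
  linear_combination h

theorem mul_mutate (h : qMarkovEq a b c) :
    c * (T (-1) * (T 2 + T 1 + 1) * (a * b) - c) = a ^ 2 + b ^ 2 - (T 1 - 1) * (T (-1) - 1) := by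
  unfold qMarkovEq at h
  linear_combination -h

theorem ev1_mul_mutate (h : qMarkovEq a b c) :
    ev1 c * ev1 (T (-1) * (T 2 + T 1 + 1) * (a * b) - c) = ev1 a ^ 2 + ev1 b ^ 2 := by
  rw [← map_mul, h.mul_mutate]
  simp [ev1_T]

end qMarkovEq

/-- Mutating the third entry of a `q`-Markov triple again yields a
`q`-Markov triple (in particular it satisfies the `q`-Markov equation and the mutated
entry evaluates to a positive integer at `q = 1`). -/
theorem qMarkovTriple_mutate (a b c : LaurentPolynomial ℤ) (h : qMarkovTriple a b c) :
    qMarkovTriple a b (T (-1) * (T 2 + T 1 + 1) * (a * b) - c) := by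
  obtain ⟨heq, ha, hb, hc⟩ := h
  refine ⟨heq.mutate, ha, hb, pos_of_mul_pos_right ?_ hc.le⟩
  rw [heq.ev1_mul_mutate]
  positivity

end QMarkovPaper
end

section
/- If (a,b,c) is a q-Markov triple in which each of a, b, c is a constant Laurent polynomial (an element of ℤ), then (a,b,c) = (1,1,1). -/
open LaurentPolynomial

namespace QMarkovPaper

noncomputable def evm1 : LaurentPolynomial ℤ →+* ℤ :=
  AddMonoidAlgebra.liftNCRingHom (RingHom.id ℤ)
    ((Units.coeHom ℤ).comp (zpowersHom ℤˣ (-1))) (fun _ _ => Commute.all _ _)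

lemma ev1_C (x : ℤ) : ev1 (C x) = x := by
  rw [LaurentPolynomial.C, ev1, AddMonoidAlgebra.liftNCRingHom]
  show AddMonoidAlgebra.liftNC _ _ (AddMonoidAlgebra.single 0 x) = x
  rw [AddMonoidAlgebra.liftNC_single]; simp

lemma evm1_T (n : ℤ) : evm1 (T n) = ((((-1:ℤˣ))^n : ℤˣ) : ℤ) := by
  rw [T, evm1, AddMonoidAlgebra.liftNCRingHom]
  show AddMonoidAlgebra.liftNC _ _ (AddMonoidAlgebra.single n 1) = _
  rw [AddMonoidAlgebra.liftNC_single]; simp [zpowersHom]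

lemma evm1_T_one : evm1 (T 1) = -1 := by rw [evm1_T]; norm_num
lemma evm1_T_two : evm1 (T 2) = 1 := by rw [evm1_T]; norm_num
lemma evm1_T_negone : evm1 (T (-1)) = -1 := by rw [evm1_T]; norm_num

lemma evm1_C (x : ℤ) : evm1 (C x) = x := by
  rw [LaurentPolynomial.C, evm1, AddMonoidAlgebra.liftNCRingHom]
  show AddMonoidAlgebra.liftNC _ _ (AddMonoidAlgebra.single 0 x) = x
  rw [AddMonoidAlgebra.liftNC_single]; simp

/-- The only `q`-Markov triple consisting of constant Laurent
polynomials is `(1, 1, 1)`. -/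
theorem qMarkovTriple_constant (a b c : LaurentPolynomial ℤ) (h : qMarkovTriple a b c)
    (ha : ∃ x : ℤ, a = C x) (hb : ∃ y : ℤ, b = C y) (hc : ∃ z : ℤ, c = C z) :
    a = 1 ∧ b = 1 ∧ c = 1 := by
  obtain ⟨heq, hpa, hpb, hpc⟩ := h
  obtain ⟨x, rfl⟩ := ha
  obtain ⟨y, rfl⟩ := hb
  obtain ⟨z, rfl⟩ := hc
  rw [ev1_C] at hpa hpb hpc
  unfold qMarkovEq at heq
  have h1 : x ^ 2 + y ^ 2 + z ^ 2 = 3 * (x * y * z) := by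
    have := congrArg ev1 heq
    simp only [map_add, map_mul, map_pow, map_sub, map_one, ev1_T, ev1_C] at this
    linarith
  have h2 : x ^ 2 + y ^ 2 + z ^ 2 = -(x * y * z) + 4 := by
    have := congrArg evm1 heq
    simp only [map_add, map_mul, map_pow, map_sub, map_one, evm1_T_one, evm1_T_two,
      evm1_T_negone, evm1_C] at this
    linarith
  have hxyz : x * y * z = 1 := by linarith
  have hx : x = 1 := by nlinarith
  have hy : y = 1 := by nlinarith
  have hz : z = 1 := by nlinarith
  subst hx hy hz
  refine ⟨map_one C, map_one C, map_one C⟩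


end QMarkovPaper
end

section
/- For every n ∈ ℤ, the matrix B(n)_q is invertible over ℤ[q^{±1}] (its determinant is 1) and A(n)_q · B(n)_q^{-1} = A(n−2)_q; consequently the trace of A(n)_q · B(n)_q^{-1} equals q + 1 + q^{-1}. -/
open LaurentPolynomial

namespace QMarkovPaper

/-! ### Auxiliary lemmas -/

instance : IsDomain (LaurentPolynomial ℤ) := NoZeroDivisors.to_isDomain _

lemma keyNat (k : ℕ) :
    (T 1 - 1 : LaurentPolynomial ℤ) * ∑ i ∈ Finset.range k, T (i : ℤ) = T (k : ℤ) - 1 := by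
  induction k with
  | zero => simp
  | succ k ih =>
    rw [Finset.sum_range_succ, mul_add, ih]
    have h1 : (T ((k : ℤ) + 1) : LaurentPolynomial ℤ) = T 1 * T (k : ℤ) := by
      rw [← T_add, show (1 + (k:ℤ)) = (k:ℤ) + 1 by ring]
    push_cast
    linear_combination -h1

lemma keyNeg (k : ℕ) :
    (T 1 - 1 : LaurentPolynomial ℤ) * (-∑ i ∈ Finset.range (k + 1), T (-(i + 1) : ℤ)) =
      T (-((k : ℤ) + 1)) - 1 := by
  induction k with
  | zero =>
    rw [zero_add, Finset.sum_range_one]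
    have h1 : (T 1 : LaurentPolynomial ℤ) * T (-((0:ℤ) + 1)) = 1 := by
      rw [← T_add, show (1 + -((0:ℤ)+1)) = 0 by ring, T_zero]
    push_cast at h1 ⊢
    linear_combination -h1
  | succ k ih =>
    rw [Finset.sum_range_succ, neg_add, mul_add, ih]
    have h1 : (T 1 : LaurentPolynomial ℤ) * T (-((k:ℤ) + 1 + 1)) = T (-((k : ℤ) + 1)) := by
      rw [← T_add, show (1 + -((k:ℤ)+1+1)) = -((k:ℤ)+1) by ring]
    have h2 : (-((↑(k+1):ℤ) + 1)) = -((k:ℤ) + 1 + 1) := by push_cast; ring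
    rw [h2]
    linear_combination -h1

lemma key (m : ℤ) : (T 1 - 1 : LaurentPolynomial ℤ) * qint m = T m - 1 := by
  cases m with
  | ofNat k => exact keyNat k
  | negSucc k =>
    have := keyNeg k
    rw [show (Int.negSucc k : ℤ) = -((k:ℤ)+1) from Int.negSucc_eq k]
    exact this

lemma T_one_sub_one_ne_zero : (T 1 - 1 : LaurentPolynomial ℤ) ≠ 0 := by
  intro h
  have h' : (T 1 : LaurentPolynomial ℤ) = 1 := by linear_combination h
  rw [← single_zero_one_eq_one] at h'
  rcases AddMonoidAlgebra.single_inj.mp h' with ⟨h1, _⟩ | ⟨_, h2⟩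
  · exact one_ne_zero h1
  · exact one_ne_zero h2

set_option maxHeartbeats 2000000 in
/-- `B(n)_q` is invertible over `ℤ[q^{±1}]` (its determinant is `1`),
`A(n)_q · B(n)_q⁻¹ = A(n−2)_q`, and consequently
`Tr (A(n)_q · B(n)_q⁻¹) = q + 1 + q⁻¹`. -/
theorem Aq_mul_Bq_inv (n : ℤ) :
    (Bq n).det = 1 ∧
      Aq n * (Bq n)⁻¹ = Aq (n - 2) ∧
      Matrix.trace (Aq n * (Bq n)⁻¹) = T 1 + 1 + T (-1) := by
  set φ : LaurentPolynomial ℤ →+* FractionRing (LaurentPolynomial ℤ) :=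
    (algebraMap (LaurentPolynomial ℤ) (FractionRing (LaurentPolynomial ℤ))) with hφ
  have hinj : Function.Injective φ := IsFractionRing.injective _ _
  have hTne : ∀ m : ℤ, φ (T m) ≠ 0 := fun m => ((isUnit_T m).map φ).ne_zero
  have hTadd : ∀ r s : ℤ, φ (T (r + s)) = φ (T r) * φ (T s) := fun r s => by
    rw [T_add, map_mul]
  have hTneg : ∀ s : ℤ, φ (T (-s)) = (φ (T s))⁻¹ := fun s => by
    have h : φ (T (-s)) * φ (T s) = 1 := by
      rw [← map_mul, ← T_add, neg_add_cancel, T_zero, map_one]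
    exact eq_inv_of_mul_eq_one_left h
  have hTsub : ∀ r s : ℤ, φ (T (r - s)) = φ (T r) * (φ (T s))⁻¹ := fun r s => by
    rw [sub_eq_add_neg, hTadd, hTneg]
  have hA : φ (T 1) ≠ 0 := hTne 1
  have hB : φ (T n) ≠ 0 := hTne n
  have hC : φ (T 1) - 1 ≠ 0 := by
    intro h
    apply T_one_sub_one_ne_zero
    apply hinj
    rw [map_sub, map_one, map_zero, h]
  have hq : ∀ m : ℤ, φ (qint m) = (φ (T m) - 1) * (φ (T 1) - 1)⁻¹ := fun m => by
    have h := congrArg φ (key m)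
    simp only [map_mul, map_sub, map_one] at h
    rw [eq_comm, mul_comm, inv_mul_eq_iff_eq_mul₀ hC, eq_comm, mul_comm]
    linear_combination h
  have p2 : φ (T 2) = φ (T 1) ^ 2 := by
    rw [show (2:ℤ) = 1 + 1 by norm_num, hTadd]; ring
  have p3 : φ (T 3) = φ (T 1) ^ 3 := by
    rw [show (3:ℤ) = 1 + 2 by norm_num, hTadd, p2]; ring
  have hdetA : ∀ m : ℤ, (Aq m).det = 1 := by
    intro m
    simp only [Aq]
    rw [Matrix.det_fin_two_of]
    apply hinj
    simp only [map_mul, map_add, map_sub, map_one, hq, hTsub, hTadd, hTneg, p3, p2, T_zero]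
    set A := φ (T 1) with hAdef
    set B := φ (T m) with hBdef
    have hBm : B ≠ 0 := hTne m
    field_simp [mul_ne_zero_iff, hA, hBm, hC]
    ring
  have hdet : (Bq n).det = 1 := by
    rw [Bq, Matrix.det_mul, hdetA, hdetA, one_mul]
  have hE : Aq (n - 2) * Aq n = Aq n * Matrix.adjugate (Aq (n + 1)) := by
    simp only [Aq, Matrix.adjugate_fin_two_of, Matrix.mul_fin_two]
    refine Matrix.ext fun i j => ?_
    fin_cases i <;> fin_cases j <;>
      simp only [Fin.zero_eta, Fin.mk_one, Fin.isValue, Matrix.cons_val_zero,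
        Matrix.cons_val_one, Matrix.head_cons, Matrix.of_apply, Matrix.cons_val',
        Matrix.empty_val', Matrix.cons_val_fin_one, Matrix.head_fin_const]
    · apply hinj
      simp only [map_mul, map_add, map_sub, map_one, map_neg, hq, hTsub, hTadd, hTneg, p3, p2, T_zero]
      set A := φ (T 1) with hAdef
      set B := φ (T n) with hBdef
      field_simp [mul_ne_zero_iff, hA, hB, hC]
      ring
    · apply hinj
      simp only [map_mul, map_add, map_sub, map_one, map_neg, hq, hTsub, hTadd, hTneg, p3, p2, T_zero]
      set A := φ (T 1) with hAdef
      set B := φ (T n) with hBdef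
      field_simp [mul_ne_zero_iff, hA, hB, hC]
      ring
    · apply hinj
      simp only [map_mul, map_add, map_sub, map_one, map_neg, hq, hTsub, hTadd, hTneg, p3, p2, T_zero]
      set A := φ (T 1) with hAdef
      set B := φ (T n) with hBdef
      field_simp [mul_ne_zero_iff, hA, hB, hC]
      ring
    · apply hinj
      simp only [map_mul, map_add, map_sub, map_one, map_neg, hq, hTsub, hTadd, hTneg, p3, p2, T_zero]
      set A := φ (T 1) with hAdef
      set B := φ (T n) with hBdef
      field_simp [mul_ne_zero_iff, hA, hB, hC]
      ring
  have hAB : Aq (n - 2) * Bq n = Aq n := by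
    rw [Bq, ← Matrix.mul_assoc, hE, Matrix.mul_assoc, Matrix.adjugate_mul, hdetA, one_smul,
      Matrix.mul_one]
  have hu : IsUnit (Bq n).det := by rw [hdet]; exact isUnit_one
  have h2 : Aq n * (Bq n)⁻¹ = Aq (n - 2) := by
    rw [← hAB]
    exact Matrix.mul_nonsing_inv_cancel_right _ _ hu
  refine ⟨hdet, h2, ?_⟩
  rw [h2]
  simp only [Aq]
  rw [Matrix.trace_fin_two_of]
  apply hinj
  simp only [map_mul, map_add, map_sub, map_one, hq, hTsub, hTadd, hTneg, p3, p2, T_zero]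
  set A := φ (T 1) with hAdef
  set B := φ (T n) with hBdef
  field_simp [mul_ne_zero_iff, hA, hB, hC]
  ring

end QMarkovPaper
end

section
/- q-Markov numbers indexed by distinct vertices of the binary tree are distinct (the q-analogue of the Markov uniqueness conjecture): for each finite word u over {0,1}, with P_1(u) = (M, N), there is a unique Laurent polynomial m_u ∈ ℤ[q^{±1}] such that (q + 1 + q^{-1})·m_u = Tr(M·N); and the resulting map u ↦ m_u from finite words over {0,1} to ℤ[q^{±1}] is injective. -/
open LaurentPolynomial

namespace QMarkovPaper

/-! ### Auxiliary machinery: coefficient bounds for Laurent polynomials -/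

/-- All coefficients of `p` in degrees above `n` vanish. -/
def DegLE (n : ℤ) (p : LaurentPolynomial ℤ) : Prop := ∀ k : ℤ, n < k → p.coeff k = 0

lemma degLE_mono {m n : ℤ} (h : m ≤ n) {p} (hp : DegLE m p) : DegLE n p :=
  fun k hk => hp k (lt_of_le_of_lt h hk)

lemma degLE_zero (n : ℤ) : DegLE n 0 := fun _ _ => rfl

lemma degLE_add {n p q} (hp : DegLE n p) (hq : DegLE n q) : DegLE n (p + q) := by
  intro k hk
  have : (p + q).coeff k = p.coeff k + q.coeff k := rfl
  rw [this, hp k hk, hq k hk, add_zero]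

lemma degLE_mul {m n p q} (hp : DegLE m p) (hq : DegLE n q) : DegLE (m + n) (p * q) := by
  intro k hk
  by_contra h
  have hk' : k ∈ (p * q).coeff.support := Finsupp.mem_support_iff.mpr h
  have := AddMonoidAlgebra.support_coeff_mul_subset p q hk'
  rw [Finset.mem_add] at this
  obtain ⟨a, ha, b, hb, rfl⟩ := this
  have hpa : p.coeff a ≠ 0 := Finsupp.mem_support_iff.mp ha
  have hqb : q.coeff b ≠ 0 := Finsupp.mem_support_iff.mp hb
  have h1 : a ≤ m := by by_contra h'; exact hpa (hp a (by omega))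
  have h2 : b ≤ n := by by_contra h'; exact hqb (hq b (by omega))
  omega

/-- `sg n a` is the monomial `a·qⁿ`. -/
noncomputable def sg (n a : ℤ) : LaurentPolynomial ℤ := AddMonoidAlgebra.single n a

lemma sg_mul (m n a b : ℤ) : sg m a * sg n b = sg (m+n) (a*b) :=
  AddMonoidAlgebra.single_mul_single _ _ _ _

lemma sg_apply (n a k : ℤ) : (sg n a).coeff k = if n = k then a else 0 := Finsupp.single_apply

lemma degLE_sg {m n a : ℤ} (h : m ≤ n) : DegLE n (sg m a) := by
  intro k hk; rw [sg_apply, if_neg]; omega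

lemma sg_T (n : ℤ) : sg n 1 = T n := rfl
lemma sg_zero (n : ℤ) : sg n 0 = 0 := AddMonoidAlgebra.single_zero _
lemma sg_one : sg 0 1 = 1 := rfl

lemma degLE_T {m n : ℤ} (h : m ≤ n) : DegLE n (T m : LaurentPolynomial ℤ) := by
  have := degLE_sg (a := 1) h; rwa [sg_T] at this

lemma degLE_one {n : ℤ} (h : 0 ≤ n) : DegLE n (1 : LaurentPolynomial ℤ) := by
  have := degLE_sg (a := 1) h; rwa [sg_one] at this

/-! ### The two leading coefficients of a Laurent polynomial -/

/-- `p = qᴱ + (lower order terms)`. -/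
def Shape1 (E : ℤ) (p : LaurentPolynomial ℤ) : Prop :=
  ∃ r, p = sg E 1 + r ∧ DegLE (E-1) r

/-- `p = q^D + a·q^(D-1) + (lower order terms)`. -/
def Shape2 (D a : ℤ) (p : LaurentPolynomial ℤ) : Prop :=
  ∃ r, p = sg D 1 + sg (D-1) a + r ∧ DegLE (D-2) r

lemma shape1_degLE {E p} (h : Shape1 E p) : DegLE E p := by
  obtain ⟨r, rfl, hr⟩ := h
  exact degLE_add (degLE_sg le_rfl) (degLE_mono (by omega) hr)

lemma shape2_degLE {D a p} (h : Shape2 D a p) : DegLE D p := by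
  obtain ⟨r, rfl, hr⟩ := h
  exact degLE_add (degLE_add (degLE_sg le_rfl) (degLE_sg (by omega)))
    (degLE_mono (by omega) hr)

lemma shape2_shape1 {D a p} (h : Shape2 D a p) : Shape1 D p := by
  obtain ⟨r, rfl, hr⟩ := h
  exact ⟨sg (D-1) a + r, by ring, degLE_add (degLE_sg le_rfl) (degLE_mono (by omega) hr)⟩

lemma shape1_congr {E E' p} (h : E = E') (hp : Shape1 E p) : Shape1 E' p := h ▸ hp

lemma shape2_congr {D D' a a' p} (h : D = D') (h' : a = a') (hp : Shape2 D a p) :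
    Shape2 D' a' p := h ▸ h' ▸ hp

lemma shape1_add_degLE {E p q} (hp : Shape1 E p) (hq : DegLE (E-1) q) : Shape1 E (p+q) := by
  obtain ⟨r, rfl, hr⟩ := hp
  exact ⟨r + q, by ring, degLE_add hr hq⟩

lemma shape2_add_degLE {D a p q} (hp : Shape2 D a p) (hq : DegLE (D-2) q) :
    Shape2 D a (p+q) := by
  obtain ⟨r, rfl, hr⟩ := hp
  exact ⟨r + q, by ring, degLE_add hr hq⟩

lemma shape2_add_shape1 {D a p q} (hp : Shape2 D a p) (hq : Shape1 (D-1) q) :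
    Shape2 D (a+1) (p+q) := by
  obtain ⟨r, rfl, hr⟩ := hp
  obtain ⟨s, rfl, hs⟩ := hq
  refine ⟨r + s, ?_, degLE_add hr (degLE_mono (by omega) hs)⟩
  have : sg (D-1) (a+1) = sg (D-1) a + sg (D-1) 1 := AddMonoidAlgebra.single_add _ _ _
  rw [this]; ring

lemma shape1_mul {E F p q} (hp : Shape1 E p) (hq : Shape1 F q) : Shape1 (E+F) (p*q) := by
  obtain ⟨r, rfl, hr⟩ := hp
  obtain ⟨s, rfl, hs⟩ := hq
  refine ⟨sg E 1 * s + r * (sg F 1 + s), ?_, ?_⟩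
  · rw [add_mul, mul_add, sg_mul]; ring_nf
  · apply degLE_add
    · have := degLE_mul (degLE_sg (a := 1) (le_refl E)) hs
      exact degLE_mono (by omega) this
    · have := degLE_mul hr (degLE_add (degLE_sg (a := 1) (show F ≤ F from le_rfl))
        (degLE_mono (by omega) hs))
      exact degLE_mono (by omega) this

lemma shape2_mul {D E a b p q} (hp : Shape2 D a p) (hq : Shape2 E b q) :
    Shape2 (D+E) (a+b) (p*q) := by
  obtain ⟨r, rfl, hr⟩ := hp
  obtain ⟨s, rfl, hs⟩ := hq
  refine ⟨sg (D+E-2) (a*b) + (sg D 1 + sg (D-1) a) * s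
      + r * (sg E 1 + sg (E-1) b + s), ?_, ?_⟩
  · have e1 : sg (D+E-1) (a+b) = sg (D+E-1) a + sg (D+E-1) b := AddMonoidAlgebra.single_add _ _ _
    rw [e1]
    simp only [add_mul, mul_add, sg_mul]
    ring_nf
  · refine degLE_add (degLE_add (degLE_sg le_rfl) ?_) ?_
    · have := degLE_mul (degLE_add (degLE_sg (a := 1) (le_refl D))
        (degLE_sg (a := a) (show D-1 ≤ D by omega))) hs
      exact degLE_mono (by omega) this
    · have hq' : DegLE E (sg E 1 + sg (E-1) b + s) :=
        degLE_add (degLE_add (degLE_sg le_rfl) (degLE_sg (a := b) (by omega)))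
          (degLE_mono (by omega) hs)
      have := degLE_mul hr hq'
      exact degLE_mono (by omega) this

lemma shape2_coeffs {D a p} (h : Shape2 D a p) :
    p.coeff D = 1 ∧ p.coeff (D-1) = a ∧ ∀ k, D < k → p.coeff k = 0 := by
  obtain ⟨r, rfl, hr⟩ := h
  have hco : ∀ k : ℤ, (sg D 1 + sg (D-1) a + r).coeff k = (sg D 1).coeff k + (sg (D-1) a).coeff k + r.coeff k :=
    fun k => rfl
  refine ⟨?_, ?_, ?_⟩
  · rw [hco, sg_apply, sg_apply, if_pos rfl, if_neg (by omega), hr D (by omega)]; ring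
  · rw [hco, sg_apply, sg_apply, if_neg (by omega), if_pos rfl, hr (D-1) (by omega)]; ring
  · intro k hk
    rw [hco, sg_apply, sg_apply, if_neg (by omega), if_neg (by omega), hr k (by omega)]; ring

/-- A Laurent polynomial determines its two leading coefficients. -/
lemma shape2_unique {D E a b p} (hp : Shape2 D a p) (hq : Shape2 E b p) :
    D = E ∧ a = b := by
  obtain ⟨h1, h2, h3⟩ := shape2_coeffs hp
  obtain ⟨h1', h2', h3'⟩ := shape2_coeffs hq
  have hDE : D = E := by
    by_contra h
    rcases lt_or_gt_of_ne h with h | h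
    · have := h3 E h; rw [h1'] at this; exact one_ne_zero this
    · have := h3' D h; rw [h1] at this; exact one_ne_zero this
  subst hDE
  rw [h2] at h2'
  exact ⟨rfl, h2'⟩

/-! ### The structural invariant for products of `q`-Cohn matrices -/

abbrev Mat := Matrix (Fin 2) (Fin 2) (LaurentPolynomial ℤ)

/-- Structural invariant for a product of `s` copies of `A(1)_q` and `t` copies of
`B(1)_q` whose last factor is `A(1)_q` iff `l = true`. -/
def Good (s t : ℕ) (l : Bool) (W : Mat) : Prop :=
  Shape2 ((s : ℤ) + 2*t) ((s : ℤ) + t - (if l then 1 else 0)) (W 0 0) ∧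
  Shape2 ((s : ℤ) + 2*t) ((s : ℤ) + t - (if l then 1 else 0)) (W 1 0) ∧
  Shape1 ((s : ℤ) + 2*t - (if l then 1 else 2)) (W 0 1) ∧
  Shape1 ((s : ℤ) + 2*t - (if l then 1 else 2)) (W 1 1)

lemma good_congr {s s' t t' : ℕ} {l : Bool} {W : Mat} (h : s = s') (h' : t = t')
    (hg : Good s t l W) : Good s' t' l W := h ▸ h' ▸ hg

lemma mul_entry (W V : Mat) (i j : Fin 2) :
    (W * V) i j = W i 0 * V 0 j + W i 1 * V 1 j := by
  rw [Matrix.mul_apply, Fin.sum_univ_two]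

lemma good_mul {s1 t1 s2 t2 : ℕ} {l1 l2 : Bool} {W V : Mat}
    (hW : Good s1 t1 l1 W) (hV : Good s2 t2 l2 V) :
    Good (s1+s2) (t1+t2) l2 (W * V) := by
  obtain ⟨hW00, hW10, hW01, hW11⟩ := hW
  obtain ⟨hV00, hV10, hV01, hV11⟩ := hV
  set D1 : ℤ := (s1 : ℤ) + 2*t1 with hD1
  set D2 : ℤ := (s2 : ℤ) + 2*t2 with hD2
  have col0 : ∀ p x : LaurentPolynomial ℤ,
      Shape2 D1 ((s1:ℤ)+t1 - (if l1 then 1 else 0)) p →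
      Shape1 (D1 - (if l1 then 1 else 2)) x →
      Shape2 (((s1+s2 : ℕ) : ℤ) + 2*((t1+t2 : ℕ) : ℤ))
        (((s1+s2 : ℕ) : ℤ) + ((t1+t2 : ℕ) : ℤ) - (if l2 then 1 else 0))
        (p * V 0 0 + x * V 1 0) := by
    intro p x hp hx
    have h1 : Shape2 (D1 + D2)
        ((((s1:ℤ)+t1 - (if l1 then 1 else 0))) + (((s2:ℤ)+t2 - (if l2 then 1 else 0))))
        (p * V 0 0) := shape2_mul hp hV00
    have h2 : Shape1 (D1 - (if l1 then 1 else 2) + D2) (x * V 1 0) :=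
      shape1_mul hx (shape2_shape1 hV10)
    cases l1
    · have h2' : DegLE (D1 + D2 - 2) (x * V 1 0) := by
        have := shape1_degLE h2
        exact degLE_mono (by simp; omega) this
      have := shape2_add_degLE h1 h2'
      refine shape2_congr (by push_cast; ring) ?_ this
      push_cast; simp; ring
    · have h2' : Shape1 (D1 + D2 - 1) (x * V 1 0) :=
        shape1_congr (by simp; ring) h2
      have := shape2_add_shape1 h1 h2'
      refine shape2_congr (by push_cast; ring) ?_ this
      push_cast; simp; ring
  have col1 : ∀ p x : LaurentPolynomial ℤ,
      Shape2 D1 ((s1:ℤ)+t1 - (if l1 then 1 else 0)) p →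
      Shape1 (D1 - (if l1 then 1 else 2)) x →
      Shape1 (((s1+s2 : ℕ) : ℤ) + 2*((t1+t2 : ℕ) : ℤ) - (if l2 then 1 else 2))
        (p * V 0 1 + x * V 1 1) := by
    intro p x hp hx
    have h1 : Shape1 (D1 + (D2 - (if l2 then 1 else 2))) (p * V 0 1) :=
      shape1_mul (shape2_shape1 hp) hV01
    have h2 : Shape1 ((D1 - (if l1 then 1 else 2)) + (D2 - (if l2 then 1 else 2)))
        (x * V 1 1) := shape1_mul hx hV11
    have h2' : DegLE (D1 + (D2 - (if l2 then 1 else 2)) - 1) (x * V 1 1) := by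
      have := shape1_degLE h2
      refine degLE_mono ?_ this
      cases l1 <;> simp <;> omega
    have := shape1_add_degLE h1 h2'
    exact shape1_congr (by push_cast; ring) this
  refine ⟨?_, ?_, ?_, ?_⟩
  · rw [mul_entry]; exact col0 _ _ hW00 hW01
  · rw [mul_entry]; exact col0 _ _ hW10 hW11
  · rw [mul_entry]; exact col1 _ _ hW00 hW01
  · rw [mul_entry]; exact col1 _ _ hW10 hW11

/-- The trace of a word in the `q`-Cohn matrices is
`q^(s+2t) + (s+t)·q^(s+2t-1) + (lower order terms)`. -/
lemma good_trace {s t : ℕ} {l : Bool} {W : Mat} (h : Good s t l W) :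
    Shape2 ((s : ℤ) + 2*t) ((s : ℤ) + t) (Matrix.trace W) := by
  obtain ⟨h00, _, _, h11⟩ := h
  rw [Matrix.trace_fin_two]
  cases l
  · have h11' : DegLE ((s : ℤ) + 2*t - 2) (W 1 1) := by
      have := shape1_degLE h11
      exact degLE_mono (by simp) this
    have := shape2_add_degLE h00 h11'
    exact shape2_congr rfl (by simp) this
  · have h11' : Shape1 ((s : ℤ) + 2*t - 1) (W 1 1) := shape1_congr (by simp) h11
    have := shape2_add_shape1 h00 h11'
    exact shape2_congr rfl (by simp) this

/-! ### The base matrices `A(1)_q` and `B(1)_q` explicitly -/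

lemma Tmul : ∀ m n : ℤ, (T m * T n : LaurentPolynomial ℤ) = T (m + n) :=
  fun m n => (T_add m n).symm

lemma qint_one : qint 1 = 1 := by
  show qint (Int.ofNat 1) = 1
  simp [qint]

lemma qint_two : qint 2 = 1 + T 1 := by
  show qint (Int.ofNat 2) = 1 + T 1
  rw [qint, Finset.sum_range_succ, Finset.sum_range_one]
  norm_num

noncomputable def A1 : Mat := !![T 1, 1; T 1, 1 + T (-1)]
noncomputable def B1 : Mat :=
  !![T 2 + T 1 + 1, 1 + T (-1); T 2 + T 1 + 1 + T (-1), 1 + T (-1) + T (-2)]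

lemma Aq_one : Aq 1 = A1 := by
  have h : ((1 : LaurentPolynomial ℤ) + T 1) * T (-1) = 1 + T (-1) := by
    rw [add_mul, one_mul, Tmul]; norm_num; ring
  rw [Aq, A1]
  norm_num [qint_one, qint_two, h]

lemma Aq_two : Aq 2 = !![1 + T 1, T (-1); 1, T (-1)] := by
  rw [Aq]
  norm_num [qint_one, qint_two]

lemma Bq_one : Bq 1 = B1 := by
  rw [Bq, show (1 + 1 : ℤ) = 2 by norm_num, Aq_one, Aq_two, A1, B1, Matrix.mul_fin_two]
  have e00 : (T 1 * (1 + T 1) + 1 * 1 : LaurentPolynomial ℤ) = T 2 + T 1 + 1 := by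
    rw [mul_add, mul_one, Tmul]; norm_num; ring
  have e01 : (T 1 * T (-1) + 1 * T (-1) : LaurentPolynomial ℤ) = 1 + T (-1) := by
    rw [Tmul, one_mul]; norm_num
  have e10 : (T 1 * (1 + T 1) + (1 + T (-1)) * 1 : LaurentPolynomial ℤ)
      = T 2 + T 1 + 1 + T (-1) := by
    rw [mul_add, mul_one, Tmul, mul_one]; norm_num; ring
  have e11 : (T 1 * T (-1) + (1 + T (-1)) * T (-1) : LaurentPolynomial ℤ)
      = 1 + T (-1) + T (-2) := by
    rw [Tmul, add_mul, one_mul, Tmul]; norm_num; ring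
  rw [e00, e01, e10, e11]

lemma good_A : Good 1 0 true A1 := by
  rw [A1]
  refine ⟨?_, ?_, ?_, ?_⟩ <;> norm_num
  · exact ⟨0, by rw [sg_T, sg_zero]; norm_num, degLE_zero _⟩
  · exact ⟨0, by rw [sg_T, sg_zero]; norm_num, degLE_zero _⟩
  · exact ⟨0, by rw [sg_one]; norm_num, degLE_zero _⟩
  · exact ⟨T (-1), by rw [sg_one], degLE_T (by norm_num)⟩

lemma good_B : Good 0 1 false B1 := by
  rw [B1]
  refine ⟨?_, ?_, ?_, ?_⟩ <;> norm_num
  · exact ⟨1, by rw [sg_T, sg_T]; norm_num, degLE_one le_rfl⟩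
  · exact ⟨1 + T (-1), by rw [sg_T, sg_T]; norm_num; ring,
      degLE_add (degLE_one le_rfl) (degLE_T (by norm_num))⟩
  · exact ⟨T (-1), by rw [sg_one], degLE_T (by norm_num)⟩
  · exact ⟨T (-1) + T (-2), by rw [sg_one]; ring,
      degLE_add (degLE_T (by norm_num)) (degLE_T (by norm_num))⟩

/-! ### Divisibility of traces by `q + 1 + q⁻¹` -/

noncomputable def Phi : LaurentPolynomial ℤ := T 1 + 1 + T (-1)

lemma detA : Matrix.det A1 = 1 := by
  rw [A1, Matrix.det_fin_two_of]
  simp only [mul_add, add_mul, one_mul, mul_one, Tmul]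
  norm_num

lemma detB : Matrix.det B1 = 1 := by
  rw [B1, Matrix.det_fin_two_of]
  simp only [mul_add, add_mul, one_mul, mul_one, Tmul]
  norm_num
  ring

lemma trA : Matrix.trace A1 = Phi := by
  rw [A1, Matrix.trace_fin_two_of, Phi]; ring

lemma trB : Matrix.trace B1 = Phi * (T 1 + T (-1)) := by
  rw [B1, Matrix.trace_fin_two_of, Phi]
  simp only [mul_add, add_mul, one_mul, mul_one, Tmul]
  norm_num

lemma trAB : Matrix.trace (A1 * B1) = Phi * (T 2 + T 1 + 1 + T (-1) + T (-2)) := by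
  rw [A1, B1, Matrix.mul_fin_two, Matrix.trace_fin_two_of, Phi]
  simp only [mul_add, add_mul, one_mul, mul_one, Tmul]
  norm_num
  ring

lemma tr_left (M N : Mat) :
    Matrix.trace (M*(M*N)) + M.det * Matrix.trace N
      = Matrix.trace M * Matrix.trace (M*N) := by
  simp only [Matrix.trace_fin_two, Matrix.mul_apply, Fin.sum_univ_two, Matrix.det_fin_two]
  ring

lemma tr_right (M N : Mat) :
    Matrix.trace ((M*N)*N) + N.det * Matrix.trace M
      = Matrix.trace N * Matrix.trace (M*N) := by
  simp only [Matrix.trace_fin_two, Matrix.mul_apply, Fin.sum_univ_two, Matrix.det_fin_two]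
  ring

/-! ### Stern–Brocot coordinates of vertices of the binary tree -/

/-- Stern–Brocot coordinates of a vertex. -/
def xy : List Bool → ℕ × ℕ
  | [] => (1, 1)
  | false :: u => ((xy u).1 + (xy u).2, (xy u).2)
  | true :: u => ((xy u).1, (xy u).1 + (xy u).2)

lemma xy_pos : ∀ u : List Bool, 1 ≤ (xy u).1 ∧ 1 ≤ (xy u).2
  | [] => ⟨le_rfl, le_rfl⟩
  | false :: u => by have := xy_pos u; simp [xy]; omega
  | true :: u => by have := xy_pos u; simp [xy]; omega

lemma xy_inj : ∀ u v : List Bool, xy u = xy v → u = v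
  | [], [], _ => rfl
  | [], false :: v, h => by
      have := xy_pos v; simp [xy, Prod.ext_iff] at h; omega
  | [], true :: v, h => by
      have := xy_pos v; simp [xy, Prod.ext_iff] at h; omega
  | false :: u, [], h => by
      have := xy_pos u; simp [xy, Prod.ext_iff] at h; omega
  | true :: u, [], h => by
      have := xy_pos u; simp [xy, Prod.ext_iff] at h; omega
  | false :: u, true :: v, h => by
      have hu := xy_pos u; have hv := xy_pos v
      simp [xy, Prod.ext_iff] at h; omega
  | true :: u, false :: v, h => by
      have hu := xy_pos u; have hv := xy_pos v
      simp [xy, Prod.ext_iff] at h; omega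
  | false :: u, false :: v, h => by
      have : xy u = xy v := by
        simp [xy, Prod.ext_iff] at h; exact Prod.ext (by omega) (by omega)
      rw [xy_inj u v this]
  | true :: u, true :: v, h => by
      have : xy u = xy v := by
        simp [xy, Prod.ext_iff] at h; exact Prod.ext (by omega) (by omega)
      rw [xy_inj u v this]

/-! ### The two invariants propagated down the tree -/

lemma foldl_good : ∀ (u : List Bool) (M N : Mat) (sM tM sN tN : ℕ) (lM lN : Bool),
    Good sM tM lM M → Good sN tN lN N →
    ∃ l, Good ((xy u).1 * sM + (xy u).2 * sN) ((xy u).1 * tM + (xy u).2 * tN) l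
      ((u.foldl (fun p b => if b then (p.1 * p.2, p.2) else (p.1, p.1 * p.2)) (M, N)).1 *
       (u.foldl (fun p b => if b then (p.1 * p.2, p.2) else (p.1, p.1 * p.2)) (M, N)).2)
  | [], M, N, sM, tM, sN, tN, lM, lN, hM, hN => by
      refine ⟨lN, ?_⟩
      simp only [List.foldl_nil, xy, one_mul]
      exact good_mul hM hN
  | false :: u, M, N, sM, tM, sN, tN, lM, lN, hM, hN => by
      obtain ⟨l, hg⟩ := foldl_good u M (M*N) sM tM (sM+sN) (tM+tN) lM lN hM (good_mul hM hN)
      refine ⟨l, ?_⟩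
      simp only [List.foldl_cons, if_neg (by simp : ¬ (false = true))]
      exact good_congr (by simp [xy]; ring) (by simp [xy]; ring) hg
  | true :: u, M, N, sM, tM, sN, tN, lM, lN, hM, hN => by
      obtain ⟨l, hg⟩ := foldl_good u (M*N) N (sM+sN) (tM+tN) sN tN lN lN (good_mul hM hN) hN
      refine ⟨l, ?_⟩
      simp only [List.foldl_cons, if_pos rfl]
      exact good_congr (by simp [xy]; ring) (by simp [xy]; ring) hg

lemma foldl_dvd : ∀ (u : List Bool) (M N : Mat),
    Matrix.det M = 1 → Matrix.det N = 1 →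
    Phi ∣ Matrix.trace M → Phi ∣ Matrix.trace N → Phi ∣ Matrix.trace (M*N) →
    Phi ∣ Matrix.trace
      ((u.foldl (fun p b => if b then (p.1 * p.2, p.2) else (p.1, p.1 * p.2)) (M, N)).1 *
       (u.foldl (fun p b => if b then (p.1 * p.2, p.2) else (p.1, p.1 * p.2)) (M, N)).2)
  | [], M, N, hdM, hdN, hM, hN, hMN => by simpa using hMN
  | false :: u, M, N, hdM, hdN, hM, hN, hMN => by
      have hkey : Matrix.trace (M*(M*N))
          = Matrix.trace M * Matrix.trace (M*N) - Matrix.det M * Matrix.trace N := by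
        exact eq_sub_of_add_eq (tr_left M N)
      have h1 : Phi ∣ Matrix.trace (M*(M*N)) := by
        rw [hkey, hdM, one_mul]
        exact dvd_sub (hM.mul_right _) hN
      have := foldl_dvd u M (M*N) hdM (by rw [Matrix.det_mul, hdM, hdN, one_mul]) hM hMN h1
      simpa only [List.foldl_cons, if_neg (by simp : ¬ (false = true))] using this
  | true :: u, M, N, hdM, hdN, hM, hN, hMN => by
      have hkey : Matrix.trace ((M*N)*N)
          = Matrix.trace N * Matrix.trace (M*N) - Matrix.det N * Matrix.trace M := by
        exact eq_sub_of_add_eq (tr_right M N)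
      have h1 : Phi ∣ Matrix.trace ((M*N)*N) := by
        rw [hkey, hdN, one_mul]
        exact dvd_sub (hN.mul_right _) hM
      have := foldl_dvd u (M*N) N (by rw [Matrix.det_mul, hdM, hdN, one_mul]) hdN hMN hN h1
      simpa only [List.foldl_cons, if_pos rfl, ↓reduceIte] using this

lemma Phi_ne_zero : Phi ≠ 0 := by
  intro h
  have h1 : Phi.coeff 1 = 1 := by
    have e : Phi = sg 1 1 + sg 0 1 + sg (-1) 1 := by
      rw [Phi, sg_T, sg_T, sg_T, T_zero]
    rw [e]
    have : (sg 1 1 + sg 0 1 + sg (-1) 1 : LaurentPolynomial ℤ).coeff 1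
        = (sg 1 1).coeff 1 + (sg 0 1).coeff 1 + (sg (-1) 1).coeff 1 := rfl
    rw [this, sg_apply, sg_apply, sg_apply]
    norm_num
  rw [h] at h1
  simp at h1

/-- At every vertex of the tree there is a unique Laurent
polynomial `m_u` with `(q + 1 + q⁻¹)·m_u = Tr (M·N)` where `P 1 u = (M, N)`, and the
map `u ↦ m_u` is injective (the `q`-analogue of the Markov uniqueness conjecture). -/
theorem qMarkov_uniqueness :
    (∀ u : List Bool, ∃! m : LaurentPolynomial ℤ,
        (T 1 + 1 + T (-1)) * m = Matrix.trace ((P 1 u).1 * (P 1 u).2)) ∧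
      ∀ (u v : List Bool) (mu mv : LaurentPolynomial ℤ),
        (T 1 + 1 + T (-1)) * mu = Matrix.trace ((P 1 u).1 * (P 1 u).2) →
        (T 1 + 1 + T (-1)) * mv = Matrix.trace ((P 1 v).1 * (P 1 v).2) →
        mu = mv → u = v := by
  have hPdef : ∀ u : List Bool, P 1 u =
      u.foldl (fun p b => if b then (p.1 * p.2, p.2) else (p.1, p.1 * p.2)) (A1, B1) := by
    intro u
    rw [P, Aq_one, Bq_one]
  have hdvd : ∀ u : List Bool, Phi ∣ Matrix.trace ((P 1 u).1 * (P 1 u).2) := by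
    intro u
    rw [hPdef u]
    exact foldl_dvd u A1 B1 detA detB (trA ▸ dvd_refl Phi) (trB ▸ Dvd.intro _ rfl)
      (trAB ▸ Dvd.intro _ rfl)
  have hshape : ∀ u : List Bool,
      Shape2 (((xy u).1 : ℤ) + 2*((xy u).2 : ℤ)) (((xy u).1 : ℤ) + ((xy u).2 : ℤ))
        (Matrix.trace ((P 1 u).1 * (P 1 u).2)) := by
    intro u
    rw [hPdef u]
    obtain ⟨l, hg⟩ := foldl_good u A1 B1 1 0 0 1 true false good_A good_B
    refine good_trace (good_congr ?_ ?_ hg) <;> omega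
  constructor
  · intro u
    obtain ⟨m, hm⟩ := hdvd u
    refine ⟨m, hm.symm, fun y hy => ?_⟩
    exact mul_left_cancel₀ Phi_ne_zero (hy.trans hm)
  · intro u v mu mv hu hv hmuv
    have htr : Matrix.trace ((P 1 u).1 * (P 1 u).2)
        = Matrix.trace ((P 1 v).1 * (P 1 v).2) := by
      rw [← hu, ← hv, hmuv]
    have h1 := hshape u
    have h2 := hshape v
    rw [htr] at h1
    obtain ⟨hD, ha⟩ := shape2_unique h1 h2
    have hx : (xy u).1 = (xy v).1 := by omega
    have hy' : (xy u).2 = (xy v).2 := by omega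
    exact xy_inj u v (Prod.ext hx hy')

end QMarkovPaper
end

section
/- The rational label of a q-Markov number can be recovered from its degree and its subleading coefficient: for every finite word u over {0,1}, let P_1(u) = (M, N) and let m_u ∈ ℤ[q^{±1}] be the unique Laurent polynomial with (q + 1 + q^{-1})·m_u = Tr(M·N); let d be the largest exponent of q with nonzero coefficient in m_u and let α be the coefficient of q^{d−1} in m_u. Then α + 1 > 0 and (d − α)/(α + 1) = t(u), the Farey (Stern–Brocot) label of u. -/
open LaurentPolynomial

namespace QMarkovPaper

/-- The Farey (Stern–Brocot) pair data of a word over `{0,1}` (`false = 0`,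
`true = 1`): `F [] = ((0,1),(1,1))`; if `F u = ((p,r),(p',r'))` then
`F (u·0) = ((p,r),(p+p',r+r'))` and `F (u·1) = ((p+p',r+r'),(p',r'))`. -/
def F (u : List Bool) : (ℤ × ℤ) × (ℤ × ℤ) :=
  u.foldl
    (fun p b =>
      if b then ((p.1.1 + p.2.1, p.1.2 + p.2.2), p.2)
      else (p.1, (p.1.1 + p.2.1, p.1.2 + p.2.2)))
    ((0, 1), (1, 1))

/-- The Farey label `t(u) = (p + p')/(r + r') ∈ ℚ` of a word `u`. -/
def fareyLabel (u : List Bool) : ℚ :=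
  (((F u).1.1 + (F u).2.1 : ℤ) : ℚ) / (((F u).1.2 + (F u).2.2 : ℤ) : ℚ)

section Aux

noncomputable instance : CoeFun (LaurentPolynomial ℤ) (fun _ => ℤ → ℤ) := ⟨fun f => f.coeff⟩

lemma add_coeff (f g : LaurentPolynomial ℤ) (k : ℤ) : (f + g) k = f k + g k :=
  Finsupp.add_apply f.coeff g.coeff k

lemma one_coeff (k : ℤ) : (1 : LaurentPolynomial ℤ) k = if (0 : ℤ) = k then 1 else 0 := by
  rw [← T_zero, T_apply]

lemma TT : ∀ m n : ℤ, T m * T n = (T (m + n) : LaurentPolynomial ℤ) :=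
  fun m n => (T_add m n).symm

lemma Aq_one_s19 : Aq 1 = !![T 1, 1; T 1, T (-1) + 1] := by
  have h3 : (3 - 1 : ℤ) = 2 := by norm_num
  rw [Aq, h3, qint_one, qint_two]
  have e : (T (-1) : LaurentPolynomial ℤ) * (1 + T 1) = T (-1) + 1 := by
    rw [mul_add, mul_one, TT]; norm_num
  norm_num [e]

lemma Bq_one_apply (i j : Fin 2) :
    Bq 1 i j = Aq 1 i 0 * Aq 2 0 j + Aq 1 i 1 * Aq 2 1 j := by
  rw [Bq, show (1 + 1 : ℤ) = 2 by norm_num, Matrix.mul_apply, Fin.sum_univ_two]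

lemma B00 : Bq 1 0 0 = 1 + T 1 + T 2 := by
  rw [Bq_one_apply, Aq_one_s19, Aq_two]
  simp only [Matrix.cons_val_zero, Matrix.cons_val_one, Matrix.head_cons, Matrix.cons_val',
    Matrix.empty_val', Matrix.cons_val_fin_one, Matrix.head_fin_const, Matrix.of_apply]
  rw [mul_add, mul_one, TT, one_mul]
  norm_num
  try ring

lemma B01 : Bq 1 0 1 = 1 + T (-1) := by
  rw [Bq_one_apply, Aq_one_s19, Aq_two]
  simp only [Matrix.cons_val_zero, Matrix.cons_val_one, Matrix.head_cons, Matrix.cons_val',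
    Matrix.empty_val', Matrix.cons_val_fin_one, Matrix.head_fin_const, Matrix.of_apply]
  rw [TT, one_mul]
  norm_num
  try ring

lemma B10 : Bq 1 1 0 = 1 + T (-1) + T 1 + T 2 := by
  rw [Bq_one_apply, Aq_one_s19, Aq_two]
  simp only [Matrix.cons_val_zero, Matrix.cons_val_one, Matrix.head_cons, Matrix.cons_val',
    Matrix.empty_val', Matrix.cons_val_fin_one, Matrix.head_fin_const, Matrix.of_apply]
  rw [mul_add, mul_one, TT, mul_one]
  norm_num
  try ring

lemma B11 : Bq 1 1 1 = 1 + T (-1) + T (-2) := by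
  rw [Bq_one_apply, Aq_one_s19, Aq_two]
  simp only [Matrix.cons_val_zero, Matrix.cons_val_one, Matrix.head_cons, Matrix.cons_val',
    Matrix.empty_val', Matrix.cons_val_fin_one, Matrix.head_fin_const, Matrix.of_apply]
  rw [TT, add_mul, one_mul, TT]
  norm_num
  try ring

lemma coeff_mul (f g : LaurentPolynomial ℤ) (x : ℤ) :
    (f * g) x = ∑ a ∈ g.coeff.support, f (x - a) * g a := by
  conv_lhs => rw [← AddMonoidAlgebra.sum_coeff_single g]
  rw [Finsupp.sum, Finset.mul_sum, AddMonoidAlgebra.coeff_sum, Finset.sum_apply']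
  exact Finset.sum_congr rfl fun a _ => AddMonoidAlgebra.coeff_mul_single_apply ..

lemma coeff_mul_vanish {f g : LaurentPolynomial ℤ} {a b : ℤ}
    (hf : ∀ k, a < k → f k = 0) (hg : ∀ k, b < k → g k = 0)
    {x : ℤ} (hx : a + b < x) : (f * g) x = 0 := by
  rw [coeff_mul]
  refine Finset.sum_eq_zero fun y hy => ?_
  by_cases hyb : b < y
  · rw [hg y hyb, mul_zero]
  · rw [hf (x - y) (by omega), zero_mul]

lemma coeff_mul_top {f g : LaurentPolynomial ℤ} {a b : ℤ}
    (hf : ∀ k, a < k → f k = 0) (hg : ∀ k, b < k → g k = 0)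
    {x : ℤ} (hx : x = a + b) : (f * g) x = f a * g b := by
  subst hx
  rw [coeff_mul]
  rw [Finset.sum_eq_single b (fun y hy hyb => ?_) (fun hb => ?_)]
  · norm_num
  · rcases lt_or_gt_of_ne hyb with h | h
    · rw [hf (a + b - y) (by omega), zero_mul]
    · rw [hg y h, mul_zero]
  · rw [Finsupp.notMem_support_iff.mp hb, mul_zero]

lemma coeff_mul_sub {f g : LaurentPolynomial ℤ} {a b : ℤ}
    (hf : ∀ k, a < k → f k = 0) (hg : ∀ k, b < k → g k = 0)
    {x : ℤ} (hx : x = a + b - 1) :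
    (f * g) x = f a * g (b - 1) + f (a - 1) * g b := by
  subst hx
  rw [coeff_mul]
  have h1 : ∑ y ∈ g.coeff.support, f (a + b - 1 - y) * g y
      = ∑ y ∈ g.coeff.support ∪ {b - 1, b}, f (a + b - 1 - y) * g y := by
    refine Finset.sum_subset Finset.subset_union_left fun y _ hy => ?_
    rw [Finsupp.notMem_support_iff.mp hy, mul_zero]
  have h2 : ∑ y ∈ ({b - 1, b} : Finset ℤ), f (a + b - 1 - y) * g y
      = ∑ y ∈ g.coeff.support ∪ {b - 1, b}, f (a + b - 1 - y) * g y := by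
    refine Finset.sum_subset Finset.subset_union_right fun y hy hy2 => ?_
    simp only [Finset.mem_insert, Finset.mem_singleton, not_or] at hy2
    by_cases hyb : b < y
    · rw [hg y hyb, mul_zero]
    · rw [hf (a + b - 1 - y) (by omega), zero_mul]
  rw [h1, ← h2, Finset.sum_pair (by omega)]
  ring_nf

/-- The leading-coefficient invariant for a `q`-Cohn matrix with Farey data `(p, r)`. -/
structure Inv (X : Matrix (Fin 2) (Fin 2) (LaurentPolynomial ℤ)) (p r : ℤ) : Prop where
  bdd00 : ∀ k, p + r < k → X 0 0 k = 0
  top00 : X 0 0 (p + r) = 1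
  bdd01 : ∀ k, p + r - 1 < k → X 0 1 k = 0
  bdd10 : ∀ k, p + r < k → X 1 0 k = 0
  top10 : X 1 0 (p + r) = 1
  bdd11 : ∀ k, p + r - 1 < k → X 1 1 k = 0
  sub : X 0 0 (p + r - 1) + X 0 1 (p + r - 1) = r

lemma Inv.mul {M N : Matrix (Fin 2) (Fin 2) (LaurentPolynomial ℤ)} {p r p' r' : ℤ}
    (hM : Inv M p r) (hN : Inv N p' r') : Inv (M * N) (p + p') (r + r') := by
  have e : ∀ i j, (M * N) i j = M i 0 * N 0 j + M i 1 * N 1 j := by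
    intro i j
    rw [Matrix.mul_apply, Fin.sum_univ_two]
  constructor
  · intro k hk
    rw [e, add_coeff,
      coeff_mul_vanish hM.bdd00 hN.bdd00 (by omega),
      coeff_mul_vanish hM.bdd01 hN.bdd10 (by omega), add_zero]
  · rw [e, add_coeff,
      coeff_mul_top hM.bdd00 hN.bdd00 (by omega : p + p' + (r + r') = (p+r) + (p'+r')),
      coeff_mul_vanish hM.bdd01 hN.bdd10 (by omega), hM.top00, hN.top00]
    norm_num
  · intro k hk
    rw [e, add_coeff,
      coeff_mul_vanish hM.bdd00 hN.bdd01 (by omega),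
      coeff_mul_vanish hM.bdd01 hN.bdd11 (by omega), add_zero]
  · intro k hk
    rw [e, add_coeff,
      coeff_mul_vanish hM.bdd10 hN.bdd00 (by omega),
      coeff_mul_vanish hM.bdd11 hN.bdd10 (by omega), add_zero]
  · rw [e, add_coeff,
      coeff_mul_top hM.bdd10 hN.bdd00 (by omega : p + p' + (r + r') = (p+r) + (p'+r')),
      coeff_mul_vanish hM.bdd11 hN.bdd10 (by omega), hM.top10, hN.top00]
    norm_num
  · intro k hk
    rw [e, add_coeff,
      coeff_mul_vanish hM.bdd10 hN.bdd01 (by omega),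
      coeff_mul_vanish hM.bdd11 hN.bdd11 (by omega), add_zero]
  · rw [e, e, add_coeff, add_coeff,
      coeff_mul_sub hM.bdd00 hN.bdd00 (by omega : p + p' + (r + r') - 1 = (p+r) + (p'+r') - 1),
      coeff_mul_top hM.bdd01 hN.bdd10 (by omega : p + p' + (r + r') - 1 = (p+r-1) + (p'+r')),
      coeff_mul_top hM.bdd00 hN.bdd01 (by omega : p + p' + (r + r') - 1 = (p+r) + (p'+r'-1)),
      coeff_mul_vanish hM.bdd01 hN.bdd11 (by omega),
      hM.top00, hN.top00, hN.top10]
    have h1 := hM.sub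
    have h2 := hN.sub
    have e1 : p + r - 1 = -1 + p + r := by ring
    have e2 : p' + r' - 1 = -1 + p' + r' := by ring
    rw [e1] at h1
    rw [e2] at h2
    ring_nf
    ring_nf at h1 h2
    omega

lemma inv_Aq_one : Inv (Aq 1) 0 1 := by
  rw [Aq_one_s19]
  refine ⟨?_, ?_, ?_, ?_, ?_, ?_, ?_⟩ <;>
    simp only [Matrix.cons_val_zero, Matrix.cons_val_one, Matrix.head_cons, Matrix.cons_val',
      Matrix.empty_val', Matrix.cons_val_fin_one, Matrix.head_fin_const, Matrix.of_apply] <;>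
    first
    | (intro k hk
       simp only [add_coeff, one_coeff, T_apply]
       split_ifs <;> omega)
    | (simp only [add_coeff, one_coeff, T_apply]
       norm_num)

lemma inv_Bq_one : Inv (Bq 1) 1 1 := by
  refine ⟨?_, ?_, ?_, ?_, ?_, ?_, ?_⟩ <;>
    simp only [B00, B01, B10, B11] <;>
    first
    | (intro k hk
       simp only [add_coeff, one_coeff, T_apply]
       split_ifs <;> omega)
    | (simp only [add_coeff, one_coeff, T_apply]
       norm_num)

/-- The master invariant for the foldl recursion. -/
lemma foldl_inv (u : List Bool) :
    ∀ (st : Matrix (Fin 2) (Fin 2) (LaurentPolynomial ℤ) ×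
        Matrix (Fin 2) (Fin 2) (LaurentPolynomial ℤ)) (fs : (ℤ × ℤ) × (ℤ × ℤ)),
      Inv st.1 fs.1.1 fs.1.2 → Inv st.2 fs.2.1 fs.2.2 → 1 ≤ fs.1.2 → 1 ≤ fs.2.2 →
      Inv (u.foldl (fun p b => if b then (p.1 * p.2, p.2) else (p.1, p.1 * p.2)) st).1
          (u.foldl (fun p b =>
            if b then ((p.1.1 + p.2.1, p.1.2 + p.2.2), p.2)
            else (p.1, (p.1.1 + p.2.1, p.1.2 + p.2.2))) fs).1.1
          (u.foldl (fun p b =>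
            if b then ((p.1.1 + p.2.1, p.1.2 + p.2.2), p.2)
            else (p.1, (p.1.1 + p.2.1, p.1.2 + p.2.2))) fs).1.2 ∧
      Inv (u.foldl (fun p b => if b then (p.1 * p.2, p.2) else (p.1, p.1 * p.2)) st).2
          (u.foldl (fun p b =>
            if b then ((p.1.1 + p.2.1, p.1.2 + p.2.2), p.2)
            else (p.1, (p.1.1 + p.2.1, p.1.2 + p.2.2))) fs).2.1
          (u.foldl (fun p b =>
            if b then ((p.1.1 + p.2.1, p.1.2 + p.2.2), p.2)
            else (p.1, (p.1.1 + p.2.1, p.1.2 + p.2.2))) fs).2.2 ∧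
      1 ≤ (u.foldl (fun p b =>
            if b then ((p.1.1 + p.2.1, p.1.2 + p.2.2), p.2)
            else (p.1, (p.1.1 + p.2.1, p.1.2 + p.2.2))) fs).1.2 ∧
      1 ≤ (u.foldl (fun p b =>
            if b then ((p.1.1 + p.2.1, p.1.2 + p.2.2), p.2)
            else (p.1, (p.1.1 + p.2.1, p.1.2 + p.2.2))) fs).2.2 := by
  induction u with
  | nil => intro st fs h1 h2 h3 h4; exact ⟨h1, h2, h3, h4⟩
  | cons b u ih =>
    intro st fs h1 h2 h3 h4
    simp only [List.foldl_cons]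
    cases b
    · simpa using ih (st.1, st.1 * st.2) (fs.1, (fs.1.1 + fs.2.1, fs.1.2 + fs.2.2))
        h1 (h1.mul h2) h3 (by dsimp only; omega)
    · simpa using ih (st.1 * st.2, st.2) ((fs.1.1 + fs.2.1, fs.1.2 + fs.2.2), fs.2)
        (h1.mul h2) h2 (by dsimp only; omega) h4

lemma key_s19 (u : List Bool) :
    Inv (P 1 u).1 (F u).1.1 (F u).1.2 ∧ Inv (P 1 u).2 (F u).2.1 (F u).2.2 ∧
      1 ≤ (F u).1.2 ∧ 1 ≤ (F u).2.2 := by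
  have := foldl_inv u (Aq 1, Bq 1) ((0, 1), (1, 1)) inv_Aq_one inv_Bq_one le_rfl le_rfl
  exact this

end Aux

/-- The rational label of a `q`-Markov number is recovered from
its degree `d` and the coefficient `α` of `q^(d−1)`: one has `α + 1 > 0` and
`(d − α)/(α + 1) = t(u)`. -/
theorem qMarkov_rational_label (u : List Bool) (m : LaurentPolynomial ℤ)
    (hm : (T 1 + 1 + T (-1)) * m = Matrix.trace ((P 1 u).1 * (P 1 u).2))
    (d : ℤ) (hd : m.degree = (d : WithBot ℤ)) (α : ℤ) (hα : m.coeff (d - 1) = α) :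
    0 < α + 1 ∧ ((d : ℚ) - (α : ℚ)) / ((α : ℚ) + 1) = fareyLabel u := by
  obtain ⟨hM, hN, hr, hr'⟩ := key_s19 u
  set p := (F u).1.1 with hp
  set r := (F u).1.2 with hrr
  set p' := (F u).2.1 with hp'
  set r' := (F u).2.2 with hrr'
  set M := (P 1 u).1 with hMdef
  set N := (P 1 u).2 with hNdef
  have hZ := hM.mul hN
  set S := p + p' + (r + r') with hS
  have etr : Matrix.trace (M * N) = (M * N) 0 0 + (M * N) 1 1 := Matrix.trace_fin_two _
  have htr0 : ∀ k, S < k → (Matrix.trace (M * N)) k = 0 := by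
    intro k hk
    rw [etr, add_coeff, hZ.bdd00 k (by omega), hZ.bdd11 k (by omega), add_zero]
  have htrS : (Matrix.trace (M * N)) S = 1 := by
    rw [etr, add_coeff, hZ.top00, hZ.bdd11 S (by omega), add_zero]
  have eZ : ∀ i j, (M * N) i j = M i 0 * N 0 j + M i 1 * N 1 j := by
    intro i j
    rw [Matrix.mul_apply, Fin.sum_univ_two]
  have h01 : (M * N) 0 1 (S - 1) = N 0 1 (p' + r' - 1) := by
    rw [eZ, add_coeff,
      coeff_mul_top hM.bdd00 hN.bdd01 (by omega : S - 1 = (p + r) + (p' + r' - 1)),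
      coeff_mul_vanish hM.bdd01 hN.bdd11 (by omega), hM.top00, one_mul, add_zero]
  have h11 : (M * N) 1 1 (S - 1) = N 0 1 (p' + r' - 1) := by
    rw [eZ, add_coeff,
      coeff_mul_top hM.bdd10 hN.bdd01 (by omega : S - 1 = (p + r) + (p' + r' - 1)),
      coeff_mul_vanish hM.bdd11 hN.bdd11 (by omega), hM.top10, one_mul, add_zero]
  have htr1 : (Matrix.trace (M * N)) (S - 1) = r + r' := by
    rw [etr, add_coeff, h11, ← h01]
    have := hZ.sub
    rw [show p + p' + (r + r') - 1 = S - 1 by omega] at this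
    exact this
  -- the factor q + 1 + q⁻¹
  set g : LaurentPolynomial ℤ := T 1 + 1 + T (-1) with hg
  have hgb : ∀ k, (1 : ℤ) < k → g k = 0 := by
    intro k hk
    rw [hg]
    simp only [add_coeff, one_coeff, T_apply]
    split_ifs <;> omega
  have hg1 : g 1 = 1 := by
    rw [hg]; simp only [add_coeff, one_coeff, T_apply]; norm_num
  have hg0 : g 0 = 1 := by
    rw [hg]; simp only [add_coeff, one_coeff, T_apply]; norm_num
  -- degree facts
  have hmb : ∀ k, d < k → m k = 0 := by
    intro k hk
    by_contra h
    have hks : k ∈ m.coeff.support := Finsupp.mem_support_iff.2 h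
    have := Finset.le_max hks
    rw [LaurentPolynomial.degree] at hd
    rw [hd] at this
    exact absurd (WithBot.coe_le_coe.1 this) (by omega)
  have hmd : m d ≠ 0 := by
    rw [LaurentPolynomial.degree] at hd
    exact Finsupp.mem_support_iff.1 (Finset.mem_of_max hd)
  have hco : ∀ k, (g * m) k = (Matrix.trace (M * N)) k := by
    intro k
    rw [hg, hm, hMdef, hNdef]
  have hgm0 : ∀ k, 1 + d < k → (g * m) k = 0 := fun k hk => coeff_mul_vanish hgb hmb hk
  have hgmtop : (g * m) (1 + d) = m d := by
    rw [coeff_mul_top hgb hmb rfl, hg1, one_mul]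
  have hgmsub : (g * m) d = m (d - 1) + m d := by
    rw [coeff_mul_sub hgb hmb (by omega : d = 1 + d - 1), hg1, show (1:ℤ)-1 = 0 by norm_num, hg0, one_mul, one_mul]
  -- identify d with S - 1
  have hdS : d = S - 1 := by
    by_contra h
    rcases lt_or_gt_of_ne h with hlt | hgt
    · have h1 : (g * m) S = 0 := hgm0 S (by omega)
      rw [hco, htrS] at h1
      exact one_ne_zero h1
    · have h1 : (g * m) (1 + d) = 0 := by
        rw [hco, htr0 (1 + d) (by omega)]
      rw [hgmtop] at h1
      exact hmd h1
  have hmdval : m d = 1 := by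
    rw [← hgmtop, hco, show (1 + d : ℤ) = S by omega, htrS]
  have hαval : α = r + r' - 1 := by
    have h1 : (g * m) d = r + r' := by
      rw [hco, show (d : ℤ) = S - 1 by omega, htr1]
    rw [hgmsub, hα, hmdval] at h1
    omega
  constructor
  · omega
  · rw [fareyLabel, ← hp, ← hrr, ← hp', ← hrr']
    have hdS' : d = p + p' + (r + r') - 1 := by rw [hdS]
    have hnum : (d : ℚ) - (α : ℚ) = ((p + p' : ℤ) : ℚ) := by
      rw [hdS', hαval]
      push_cast
      ring
    have hden : (α : ℚ) + 1 = ((r + r' : ℤ) : ℚ) := by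
      rw [hαval]
      push_cast
      ring
    rw [hnum, hden]

end QMarkovPaper
end
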